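/- For every real c with 0 < c < 1/ln 4 and every real k ≥ 2, the quantity ((1 + 2c·ln k)·2c·ln k) / (2k − 4c·ln k) is strictly less than ln 5, provided 2k − 4c·ln k > 0. -/
import Mathlib

lemma tangent_nonneg (u m l : ℝ) (h : m - 1 ≤ u) (hl0 : 0 ≤ l) (hl1 : l ≤ 1) :
    0 ≤ 1 + (u - m) * l := by nlinarith

/-- Tangent-line lower bound for `exp (u * log 2)` at the point `m`. -/
lemma expLB (m E0 u : ℝ) (hE : E0 ≤ Real.exp (m * Real.log 2)) (hE0 : 0 ≤ E0)
    (h1 : 0 ≤ 1 + (u - m) * Real.log 2) :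
    E0 * (1 + (u - m) * Real.log 2) ≤ Real.exp (u * Real.log 2) := by
  have ht : Real.exp (m * Real.log 2) * (1 + (u - m) * Real.log 2)
      ≤ Real.exp (u * Real.log 2) := by
    have h := Real.add_one_le_exp ((u - m) * Real.log 2)
    have hpos := (Real.exp_pos (m * Real.log 2)).le
    calc Real.exp (m * Real.log 2) * (1 + (u - m) * Real.log 2)
        ≤ Real.exp (m * Real.log 2) * Real.exp ((u - m) * Real.log 2) := by
          apply mul_le_mul_of_nonneg_left (by linarith) hpos
      _ = Real.exp (u * Real.log 2) := by rw [← Real.exp_add]; ring_nf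
  exact le_trans (mul_le_mul_of_nonneg_right hE h1) ht

lemma exp_half : (14142 : ℝ)/10000 ≤ Real.exp (Real.log 2 / 2) := by
  have h2 : Real.exp (Real.log 2 / 2) * Real.exp (Real.log 2 / 2) = 2 := by
    rw [← Real.exp_add, show Real.log 2/2 + Real.log 2/2 = Real.log 2 by ring,
      Real.exp_log (by norm_num : (0:ℝ) < 2)]
  nlinarith [Real.exp_pos (Real.log 2 / 2)]

lemma exp_one_l : Real.exp (Real.log 2) = 2 := Real.exp_log (by norm_num)

lemma L5 : 2 * Real.log 2 + 1/5 ≤ Real.log 5 := by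
  have h1 : Real.log (4/5) ≤ 4/5 - 1 := Real.log_le_sub_one_of_pos (by norm_num)
  have h2 : Real.log (4/5) = Real.log 4 - Real.log 5 := by
    rw [Real.log_div (by norm_num) (by norm_num)]
  have h4 : Real.log 4 = 2 * Real.log 2 := by
    rw [show (4:ℝ) = 2*2 by norm_num, Real.log_mul two_ne_zero two_ne_zero]; ring
  linarith

lemma case0 (u e l : ℝ) (hT : u * l + 1 ≤ e) (ha : 0 < u) (hb : u ≤ (1/4:ℝ))
    (hl : (6931471803/10000000000:ℝ) < l) (hl2 : l < (6931471808/10000000000:ℝ)) :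
    (1 + u) * u ≤ (15862/10000 : ℝ) * (2 * e - 2 * u) := by
  nlinarith [hT, mul_nonneg ha.le (by linarith : (0:ℝ) ≤ l - 6931471803/10000000000),
    mul_nonneg (by linarith : (0:ℝ) ≤ 1/4 - u) (by linarith : (0:ℝ) ≤ 6931471808/10000000000 - l)]

lemma case1 (u e l : ℝ) (hT : (14142/10000:ℝ) * (1 + (u - 1/2) * l) ≤ e)
    (ha : (1/4:ℝ) ≤ u) (hb : u ≤ (3/4:ℝ))
    (hl : (6931471803/10000000000:ℝ) < l) (hl2 : l < (6931471808/10000000000:ℝ)) :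
    (1 + u) * u ≤ (15862/10000 : ℝ) * (2 * e - 2 * u) := by
  nlinarith [hT, mul_nonneg (by linarith : (0:ℝ) ≤ u - 1/4) (by linarith : (0:ℝ) ≤ l - 6931471803/10000000000), mul_nonneg (by linarith : (0:ℝ) ≤ 3/4 - u) (by linarith : (0:ℝ) ≤ 6931471808/10000000000 - l)]

lemma case2 (u e l : ℝ) (hT : (2:ℝ) * (1 + (u - 1) * l) ≤ e)
    (ha : (3/4:ℝ) ≤ u) (hb : u ≤ (5/4:ℝ))
    (hl : (6931471803/10000000000:ℝ) < l) (hl2 : l < (6931471808/10000000000:ℝ)) :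
    (1 + u) * u ≤ (15862/10000 : ℝ) * (2 * e - 2 * u) := by
  nlinarith [hT, mul_nonneg (by linarith : (0:ℝ) ≤ u - 3/4) (by linarith : (0:ℝ) ≤ l - 6931471803/10000000000), mul_nonneg (by linarith : (0:ℝ) ≤ 5/4 - u) (by linarith : (0:ℝ) ≤ 6931471808/10000000000 - l)]

lemma case3 (u e l : ℝ) (hT : (28284/10000:ℝ) * (1 + (u - 3/2) * l) ≤ e)
    (ha : (5/4:ℝ) ≤ u) (hb : u ≤ (7/4:ℝ))
    (hl : (6931471803/10000000000:ℝ) < l) (hl2 : l < (6931471808/10000000000:ℝ)) :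
    (1 + u) * u ≤ (15862/10000 : ℝ) * (2 * e - 2 * u) := by
  nlinarith [hT, mul_nonneg (by linarith : (0:ℝ) ≤ u - 5/4) (by linarith : (0:ℝ) ≤ l - 6931471803/10000000000), mul_nonneg (by linarith : (0:ℝ) ≤ 7/4 - u) (by linarith : (0:ℝ) ≤ 6931471808/10000000000 - l)]

lemma case4 (u e l : ℝ) (hT : (4:ℝ) * (1 + (u - 2) * l) ≤ e)
    (ha : (7/4:ℝ) ≤ u) (hb : u ≤ (9/4:ℝ))
    (hl : (6931471803/10000000000:ℝ) < l) (hl2 : l < (6931471808/10000000000:ℝ)) :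
    (1 + u) * u ≤ (15862/10000 : ℝ) * (2 * e - 2 * u) := by
  nlinarith [hT, mul_nonneg (by linarith : (0:ℝ) ≤ u - 7/4) (by linarith : (0:ℝ) ≤ l - 6931471803/10000000000), mul_nonneg (by linarith : (0:ℝ) ≤ 9/4 - u) (by linarith : (0:ℝ) ≤ 6931471808/10000000000 - l)]

lemma case5 (u e l : ℝ) (hT : (56568/10000:ℝ) * (1 + (u - 5/2) * l) ≤ e)
    (ha : (9/4:ℝ) ≤ u) (hb : u ≤ (11/4:ℝ))
    (hl : (6931471803/10000000000:ℝ) < l) (hl2 : l < (6931471808/10000000000:ℝ)) :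
    (1 + u) * u ≤ (15862/10000 : ℝ) * (2 * e - 2 * u) := by
  nlinarith [hT, mul_nonneg (by linarith : (0:ℝ) ≤ u - 9/4) (by linarith : (0:ℝ) ≤ l - 6931471803/10000000000), mul_nonneg (by linarith : (0:ℝ) ≤ 11/4 - u) (by linarith : (0:ℝ) ≤ 6931471808/10000000000 - l)]

lemma case6 (u e l : ℝ) (hT : (8:ℝ) * (1 + (u - 3) * l) ≤ e)
    (ha : (11/4:ℝ) ≤ u) (hb : u ≤ (13/4:ℝ))
    (hl : (6931471803/10000000000:ℝ) < l) (hl2 : l < (6931471808/10000000000:ℝ)) :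
    (1 + u) * u ≤ (15862/10000 : ℝ) * (2 * e - 2 * u) := by
  nlinarith [hT, mul_nonneg (by linarith : (0:ℝ) ≤ u - 11/4) (by linarith : (0:ℝ) ≤ l - 6931471803/10000000000), mul_nonneg (by linarith : (0:ℝ) ≤ 13/4 - u) (by linarith : (0:ℝ) ≤ 6931471808/10000000000 - l)]

lemma case7 (u e l : ℝ) (hT : (113136/10000:ℝ) * (1 + (u - 7/2) * l) ≤ e)
    (ha : (13/4:ℝ) ≤ u) (hb : u ≤ (15/4:ℝ))
    (hl : (6931471803/10000000000:ℝ) < l) (hl2 : l < (6931471808/10000000000:ℝ)) :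
    (1 + u) * u ≤ (15862/10000 : ℝ) * (2 * e - 2 * u) := by
  nlinarith [hT, mul_nonneg (by linarith : (0:ℝ) ≤ u - 13/4) (by linarith : (0:ℝ) ≤ l - 6931471803/10000000000), mul_nonneg (by linarith : (0:ℝ) ≤ 15/4 - u) (by linarith : (0:ℝ) ≤ 6931471808/10000000000 - l)]

lemma case8 (u e l : ℝ) (hT : (16:ℝ) * (1 + (u - 4) * l) ≤ e)
    (ha : (15/4:ℝ) ≤ u) (hb : u ≤ (17/4:ℝ))
    (hl : (6931471803/10000000000:ℝ) < l) (hl2 : l < (6931471808/10000000000:ℝ)) :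
    (1 + u) * u ≤ (15862/10000 : ℝ) * (2 * e - 2 * u) := by
  nlinarith [hT, mul_nonneg (by linarith : (0:ℝ) ≤ u - 15/4) (by linarith : (0:ℝ) ≤ l - 6931471803/10000000000), mul_nonneg (by linarith : (0:ℝ) ≤ 17/4 - u) (by linarith : (0:ℝ) ≤ 6931471808/10000000000 - l)]
lemma case9 (u e f l : ℝ) (hsplit : e = 16 * (f * f)) (hT : (u - 4) * l / 2 + 1 ≤ f)
    (ha : (17/4:ℝ) ≤ u) (hl : (6931471803/10000000000:ℝ) < l)
    (hl2 : l < (6931471808/10000000000:ℝ)) :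
    (1 + u) * u ≤ (15862/10000 : ℝ) * (2 * e - 2 * u) := by
  have hw0 : (0:ℝ) ≤ (u - 4) * l / 2 := by nlinarith
  have hf1 : (1:ℝ) ≤ f := by linarith
  have hsq : (1 + (u - 4) * l / 2)^2 ≤ f * f := by nlinarith
  nlinarith [hsq, sq_nonneg (u - 4),
    mul_nonneg (by linarith : (0:ℝ) ≤ u - 17/4) (by linarith : (0:ℝ) ≤ l - 6931471803/10000000000),
    mul_nonneg (mul_nonneg (by linarith : (0:ℝ) ≤ u - 4) (by linarith : (0:ℝ) ≤ u - 4)) (by nlinarith : (0:ℝ) ≤ l * l - (6931471803/10000000000)^2)]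

set_option maxHeartbeats 2000000 in
lemma key (u : ℝ) (hu : 0 < u) :
    (1 + u) * u ≤ Real.log 5 * (2 * Real.exp (u * Real.log 2) - 2 * u) := by
  have l2l : (6931471803/10000000000:ℝ) < Real.log 2 := by
    have := Real.log_two_gt_d9; norm_num at this ⊢; linarith
  have l2u : Real.log 2 < (6931471808/10000000000:ℝ) := by
    have := Real.log_two_lt_d9; norm_num at this ⊢; linarith
  have hL5 := L5
  have eh := exp_half
  have e1 := exp_one_l
  have e2 : Real.exp (2 * Real.log 2) = 4 := by
    rw [show (2:ℝ) * Real.log 2 = Real.log 2 + Real.log 2 by ring, Real.exp_add, e1]; norm_num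
  have e3 : Real.exp (3 * Real.log 2) = 8 := by
    rw [show (3:ℝ) * Real.log 2 = Real.log 2 + 2 * Real.log 2 by ring, Real.exp_add, e1, e2]
    norm_num
  have e4 : Real.exp (4 * Real.log 2) = 16 := by
    rw [show (4:ℝ) * Real.log 2 = Real.log 2 + 3 * Real.log 2 by ring, Real.exp_add, e1, e3]
    norm_num
  have eh1 : (14142 : ℝ)/10000 ≤ Real.exp ((1/2) * Real.log 2) := by
    rw [show (1/2 : ℝ) * Real.log 2 = Real.log 2 / 2 by ring]; exact eh
  have eh3 : (28284 : ℝ)/10000 ≤ Real.exp ((3/2) * Real.log 2) := by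
    rw [show (3/2 : ℝ) * Real.log 2 = Real.log 2 + Real.log 2 / 2 by ring, Real.exp_add, e1]
    nlinarith [eh]
  have eh5 : (56568 : ℝ)/10000 ≤ Real.exp ((5/2) * Real.log 2) := by
    rw [show (5/2 : ℝ) * Real.log 2 = 2 * Real.log 2 + Real.log 2 / 2 by ring, Real.exp_add, e2]
    nlinarith [eh]
  have eh7 : (113136 : ℝ)/10000 ≤ Real.exp ((7/2) * Real.log 2) := by
    rw [show (7/2 : ℝ) * Real.log 2 = 3 * Real.log 2 + Real.log 2 / 2 by ring, Real.exp_add, e3]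
    nlinarith [eh]
  have P : (1 + u) * u ≤ (15862/10000 : ℝ) * (2 * Real.exp (u * Real.log 2) - 2 * u) := by
    rcases le_or_gt u (1/4) with h0 | h0
    · exact case0 u _ _ (Real.add_one_le_exp (u * Real.log 2)) hu h0 l2l l2u
    rcases le_or_gt u (3/4) with h1 | h1
    · exact case1 u _ _ (expLB (1/2) (14142/10000) u eh1 (by norm_num) (tangent_nonneg _ _ _ (by linarith) (by linarith) (by linarith))) (by linarith) h1 l2l l2u
    rcases le_or_gt u (5/4) with h2 | h2
    · exact case2 u _ _ (expLB (1) (2) u (by rw [one_mul]; exact e1.ge) (by norm_num) (tangent_nonneg _ _ _ (by linarith) (by linarith) (by linarith))) (by linarith) h2 l2l l2u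
    rcases le_or_gt u (7/4) with h3 | h3
    · exact case3 u _ _ (expLB (3/2) (28284/10000) u eh3 (by norm_num) (tangent_nonneg _ _ _ (by linarith) (by linarith) (by linarith))) (by linarith) h3 l2l l2u
    rcases le_or_gt u (9/4) with h4 | h4
    · exact case4 u _ _ (expLB (2) (4) u e2.ge (by norm_num) (tangent_nonneg _ _ _ (by linarith) (by linarith) (by linarith))) (by linarith) h4 l2l l2u
    rcases le_or_gt u (11/4) with h5 | h5
    · exact case5 u _ _ (expLB (5/2) (56568/10000) u eh5 (by norm_num) (tangent_nonneg _ _ _ (by linarith) (by linarith) (by linarith))) (by linarith) h5 l2l l2u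
    rcases le_or_gt u (13/4) with h6 | h6
    · exact case6 u _ _ (expLB (3) (8) u e3.ge (by norm_num) (tangent_nonneg _ _ _ (by linarith) (by linarith) (by linarith))) (by linarith) h6 l2l l2u
    rcases le_or_gt u (15/4) with h7 | h7
    · exact case7 u _ _ (expLB (7/2) (113136/10000) u eh7 (by norm_num) (tangent_nonneg _ _ _ (by linarith) (by linarith) (by linarith))) (by linarith) h7 l2l l2u
    rcases le_or_gt u (17/4) with h8 | h8
    · exact case8 u _ _ (expLB (4) (16) u e4.ge (by norm_num) (tangent_nonneg _ _ _ (by linarith) (by linarith) (by linarith))) (by linarith) h8 l2l l2u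
    · have hsplit : Real.exp (u * Real.log 2)
          = 16 * (Real.exp ((u - 4) * Real.log 2 / 2) * Real.exp ((u - 4) * Real.log 2 / 2)) := by
        rw [← Real.exp_add, show (u-4)*Real.log 2/2 + (u-4)*Real.log 2/2 = (u-4)*Real.log 2 by ring,
          show u * Real.log 2 = 4 * Real.log 2 + (u - 4) * Real.log 2 by ring, Real.exp_add, e4]
      exact case9 u _ _ _ hsplit (Real.add_one_le_exp _) h8.le l2l l2u
  have hfac : 0 ≤ 2 * Real.exp (u * Real.log 2) - 2 * u := by nlinarith
  nlinarith [mul_nonneg (show 0 ≤ Real.log 5 - (15862/10000 : ℝ) by linarith) hfac]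

/-- For every real `c` with `0 < c < 1/ln 4` and every real `k ≥ 2` with
`2k − 4c·ln k > 0`, the quantity `((1 + 2c·ln k)·2c·ln k)/(2k − 4c·ln k)` is
strictly less than `ln 5`. -/
theorem stmt18 (c k : ℝ) (hc0 : 0 < c) (hc1 : c < 1 / Real.log 4) (hk : 2 ≤ k)
    (hpos : 0 < 2 * k - 4 * c * Real.log k) :
    ((1 + 2 * c * Real.log k) * (2 * c * Real.log k)) /
      (2 * k - 4 * c * Real.log k) < Real.log 5 := by
  have hlog4 : Real.log 4 = 2 * Real.log 2 := by
    rw [show (4:ℝ) = 2*2 by norm_num, Real.log_mul two_ne_zero two_ne_zero]; ring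
  have l2pos : 0 < Real.log 2 := Real.log_pos (by norm_num)
  have hlog4pos : 0 < Real.log 4 := by rw [hlog4]; positivity
  have hLpos : 0 < Real.log k := Real.log_pos (by linarith)
  have hml : c * Real.log 4 < 1 := by
    rw [lt_div_iff₀ hlog4pos] at hc1; linarith
  set u := 2 * c * Real.log k with hudef
  have hu : 0 < u := by positivity
  have hlt : u * Real.log 2 < Real.log k := by
    have h1 : 2 * c * Real.log 2 < 1 := by rw [hlog4] at hml; linarith
    calc u * Real.log 2 = (2 * c * Real.log 2) * Real.log k := by ring
      _ < 1 * Real.log k := mul_lt_mul_of_pos_right h1 hLpos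
      _ = Real.log k := one_mul _
  have hek : Real.exp (u * Real.log 2) < k := by
    calc Real.exp (u * Real.log 2) < Real.exp (Real.log k) := Real.exp_lt_exp.mpr hlt
      _ = k := Real.exp_log (by linarith)
  have hkey := key u hu
  have hL5pos : 0 < Real.log 5 := Real.log_pos (by norm_num)
  rw [div_lt_iff₀ hpos]
  nlinarith [mul_pos hL5pos (sub_pos.mpr hek)]
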